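/- Assume ω₀ = −(n−1)/2 and that σ = 0 in case n > 3 (σ ∈ ℝ arbitrary in case n = 3). Assume further that for every integer k ≥ 0 there is a constant c_k with |λ^{(k)}(t)| ≤ c_k·e^{(n−1)t} for all t, and that the limit lim_{t→−∞} λ(t)·e^{−(n−1)t} exists. Then every brane scale function f satisfies the ARW conditions with constant γ̃ = (n−1)/2 and mass m̃ = m + (κ²/n²)·ρ₀² > m; in particular lim_{τ→0⁻} f′(τ)²·e^{(n−1)f(τ)} = m + (κ²/n²)·ρ₀². -/

import Mathlib

/-!
For `ω₀ = -(n-1)/2` the modified Friedmann equation reads `f'² = e^{-(n-1) f} E(f)`, where `E` is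
smooth, `E(x) → m + κ²ρ₀²/n²` as `x → -∞`, and `E'` together with all its derivatives is
`O(e^{(n-1)x})`; the last point needs `σ = 0` unless `n = 3`. Differentiating once expresses
`f''` as a function of `f`, and `f'' + γ̃ f'² = e^{-(n-1) f} E'(f) / 2`, which converges.
Every derivative of `u(f)` has the form `A(f) + B(f) f'`; if `u` and its derivatives are
`O(e^{-wγ̃x})`, those of the `k`-th coefficients `A`, `B` are `O(e^{-(w+k)γ̃x})` and
`O(e^{-(w+k-1)γ̃x})`. As `e^{-γ̃ f} = O(|f'|)` near the singularity, the `k`-th derivative of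
`u(f)` is `O(|f'|^{w+k})`.
-/

open Real Filter Set Topology
open scoped ContDiff

/-- `f` satisfies the ARW conditions with constant `γ > 0` and mass `mt > 0`:
`f'² e^{2γf} → mt` as `τ → 0⁻`, the limit of `f'' + γ f'²` exists, and the iterated
derivatives of `f'' + γ f'²` and of `f` of order `k ≥ 1` are bounded by `c_k |f'|^k`
near the singularity. -/
def ARWConds (γ mt : ℝ) (f : ℝ → ℝ) : Prop :=
  Filter.Tendsto (fun τ => (deriv f τ) ^ 2 * Real.exp (2 * γ * f τ))
      (nhdsWithin 0 (Set.Iio 0)) (nhds mt)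
  ∧ (∃ L : ℝ, Filter.Tendsto (fun τ => deriv (deriv f) τ + γ * (deriv f τ) ^ 2)
      (nhdsWithin 0 (Set.Iio 0)) (nhds L))
  ∧ ∃ δ : ℝ, 0 < δ ∧ ∀ k : ℕ, 1 ≤ k → ∃ c : ℝ,
      ∀ τ ∈ Set.Ioo (-δ) (0:ℝ),
        |iteratedDeriv k (fun s => deriv (deriv f) s + γ * (deriv f s) ^ 2) τ|
            ≤ c * |deriv f τ| ^ k
        ∧ |iteratedDeriv k f τ| ≤ c * |deriv f τ| ^ k

def IteratedDerivExpBound (r X : ℝ) (u : ℝ → ℝ) (j : ℕ) : Prop :=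
  ∃ C, 0 ≤ C ∧ ∀ x ≤ X, |iteratedDeriv j u x| ≤ C * exp (r * x)

structure ExpBoundedDerivs (r X : ℝ) (u : ℝ → ℝ) : Prop where
  contDiff : ContDiff ℝ ∞ u
  bound : ∀ j, IteratedDerivExpBound r X u j

section ExpBounds

variable {r r' X : ℝ} {u v : ℝ → ℝ}

lemma iteratedDerivExpBound_mul {j : ℕ} (hu : ContDiff ℝ ∞ u) (hv : ContDiff ℝ ∞ v)
    (hub : ∀ i ≤ j, IteratedDerivExpBound r X u i) (hvb : ∀ i ≤ j, IteratedDerivExpBound r' X v i) :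
    IteratedDerivExpBound (r + r') X (fun x => u x * v x) j := by
  choose! C hC0 hC using hub
  choose! D hD0 hD using hvb
  refine ⟨∑ i ∈ Finset.range (j + 1), j.choose i * (C i * D (j - i)), ?_, fun x hx => ?_⟩
  · refine Finset.sum_nonneg fun i hi => ?_
    have hij : i ≤ j := Nat.lt_succ_iff.1 (Finset.mem_range.1 hi)
    have := hC0 i hij
    have := hD0 (j - i) (j.sub_le i)
    positivity
  rw [iteratedDeriv_fun_mul (contDiff_infty.1 hu j).contDiffAt (contDiff_infty.1 hv j).contDiffAt,
    Finset.sum_mul]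
  refine (Finset.abs_sum_le_sum_abs _ _).trans (Finset.sum_le_sum fun i hi => ?_)
  have hij : i ≤ j := Nat.lt_succ_iff.1 (Finset.mem_range.1 hi)
  have hui := hC i hij x hx
  have hvi := hD (j - i) (j.sub_le i) x hx
  rw [abs_mul, abs_mul, Nat.abs_cast, add_mul, exp_add, mul_assoc]
  calc (j.choose i : ℝ) * (|iteratedDeriv i u x| * |iteratedDeriv (j - i) v x|)
      ≤ j.choose i * ((C i * exp (r * x)) * (D (j - i) * exp (r' * x))) :=
        mul_le_mul_of_nonneg_left (mul_le_mul hui hvi (abs_nonneg _) ((abs_nonneg _).trans hui))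
          (Nat.cast_nonneg _)
    _ = _ := by ring

namespace ExpBoundedDerivs

lemma of_rate_eq (h : r = r') (hu : ExpBoundedDerivs r X u) : ExpBoundedDerivs r' X u :=
  h ▸ hu

lemma congr (hu : ExpBoundedDerivs r X u) (h : ∀ x, u x = v x) : ExpBoundedDerivs r X v :=
  funext h ▸ hu

lemma zero : ExpBoundedDerivs r X (fun _ => 0) :=
  ⟨contDiff_const, fun j => ⟨0, le_rfl, fun x _ => by simp⟩⟩

lemma const (c : ℝ) : ExpBoundedDerivs 0 X (fun _ => c) :=
  ⟨contDiff_const, fun j => ⟨|c|, abs_nonneg c, fun x _ => by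
    rw [iteratedDeriv_const]; split_ifs <;> simp⟩⟩

lemma add (hu : ExpBoundedDerivs r X u) (hv : ExpBoundedDerivs r X v) :
    ExpBoundedDerivs r X (fun x => u x + v x) := by
  refine ⟨hu.contDiff.add hv.contDiff, fun j => ?_⟩
  obtain ⟨C, hC0, hC⟩ := hu.bound j
  obtain ⟨D, hD0, hD⟩ := hv.bound j
  refine ⟨C + D, add_nonneg hC0 hD0, fun x hx => ?_⟩
  rw [iteratedDeriv_fun_add (contDiff_infty.1 hu.contDiff j).contDiffAt
    (contDiff_infty.1 hv.contDiff j).contDiffAt, add_mul]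
  exact (abs_add_le _ _).trans (add_le_add (hC x hx) (hD x hx))

lemma const_mul (c : ℝ) (hu : ExpBoundedDerivs r X u) :
    ExpBoundedDerivs r X (fun x => c * u x) := by
  refine ⟨contDiff_const.mul hu.contDiff, fun j => ?_⟩
  obtain ⟨C, hC0, hC⟩ := hu.bound j
  refine ⟨|c| * C, by positivity, fun x hx => ?_⟩
  rw [iteratedDeriv_const_mul_field, abs_mul, mul_assoc]
  exact mul_le_mul_of_nonneg_left (hC x hx) (abs_nonneg c)

lemma sub (hu : ExpBoundedDerivs r X u) (hv : ExpBoundedDerivs r X v) :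
    ExpBoundedDerivs r X (fun x => u x - v x) := by
  simpa only [sub_eq_add_neg, neg_one_mul] using hu.add (hv.const_mul (-1))

lemma mul (hu : ExpBoundedDerivs r X u) (hv : ExpBoundedDerivs r' X v) :
    ExpBoundedDerivs (r + r') X (fun x => u x * v x) :=
  ⟨hu.contDiff.mul hv.contDiff, fun _ =>
    iteratedDerivExpBound_mul hu.contDiff hv.contDiff (fun i _ => hu.bound i)
      (fun i _ => hv.bound i)⟩

protected lemma deriv (hu : ExpBoundedDerivs r X u) : ExpBoundedDerivs r X (deriv u) :=
  ⟨(contDiff_infty_iff_deriv.1 hu.contDiff).2, fun j => by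
    simpa only [IteratedDerivExpBound, iteratedDeriv_succ'] using hu.bound (j + 1)⟩

lemma mono (hX : X ≤ 0) (h : r' ≤ r) (hu : ExpBoundedDerivs r X u) :
    ExpBoundedDerivs r' X u := by
  refine ⟨hu.contDiff, fun j => ?_⟩
  obtain ⟨C, hC0, hC⟩ := hu.bound j
  exact ⟨C, hC0, fun x hx => (hC x hx).trans
    (mul_le_mul_of_nonneg_left (exp_le_exp.2 (by nlinarith)) hC0)⟩

lemma exp {a : ℝ} (hX : X ≤ 0) (h : r ≤ a) :
    ExpBoundedDerivs r X (fun x => Real.exp (a * x)) := by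
  refine ⟨(contDiff_const.mul contDiff_id).exp, fun j => ⟨|a| ^ j, by positivity, fun x hx => ?_⟩⟩
  rw [iteratedDeriv_exp_const_mul, abs_mul, abs_pow, abs_exp]
  exact mul_le_mul_of_nonneg_left (exp_le_exp.2 (by nlinarith)) (by positivity)

lemma of_deriv_eq_mul (hu : ContDiff ℝ ∞ u) (hu0 : IteratedDerivExpBound 0 X u 0)
    (hv : ExpBoundedDerivs 0 X v) (h : deriv u = fun x => u x * v x) :
    ExpBoundedDerivs 0 X u := by
  refine ⟨hu, fun j => ?_⟩
  induction j using Nat.strong_induction_on with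
  | _ j ih =>
    cases j with
    | zero => exact hu0
    | succ j =>
      have := iteratedDerivExpBound_mul (j := j) hu hv.contDiff (fun i hi => ih i (by omega))
        (fun i _ => hv.bound i)
      simpa only [IteratedDerivExpBound, iteratedDeriv_succ', h, add_zero] using this

end ExpBoundedDerivs

end ExpBounds

structure AutonomousSolution (Φ H : ℝ → ℝ) (S : Set ℝ) (f : ℝ → ℝ) : Prop where
  isOpen : IsOpen S
  differentiableOn : DifferentiableOn ℝ f S
  differentiableOn_deriv : DifferentiableOn ℝ (deriv f) S
  sq_deriv : ∀ τ ∈ S, deriv f τ ^ 2 = Φ (f τ)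
  deriv_deriv : ∀ τ ∈ S, deriv (deriv f) τ = H (f τ)

/-- Differentiating `A (f) + B (f) f'` along `f'² = Φ (f)`, `f'' = H (f)` gives
`(B' Φ + B H) (f) + A' (f) f'`. -/
noncomputable def derivCoeffs (Φ H u : ℝ → ℝ) : ℕ → (ℝ → ℝ) × (ℝ → ℝ)
  | 0 => (u, fun _ => 0)
  | k + 1 =>
    let p := derivCoeffs Φ H u k
    (fun x => deriv p.2 x * Φ x + p.2 x * H x, deriv p.1)

section DerivCoeffs

variable {Φ H u f : ℝ → ℝ} {S T : Set ℝ}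

lemma contDiff_derivCoeffs (hΦ : ContDiff ℝ ∞ Φ) (hH : ContDiff ℝ ∞ H) (hu : ContDiff ℝ ∞ u) :
    ∀ k, ContDiff ℝ ∞ (derivCoeffs Φ H u k).1 ∧ ContDiff ℝ ∞ (derivCoeffs Φ H u k).2
  | 0 => ⟨hu, contDiff_const⟩
  | k + 1 => by
    obtain ⟨hA, hB⟩ := contDiff_derivCoeffs hΦ hH hu k
    exact ⟨((contDiff_infty_iff_deriv.1 hB).2.mul hΦ).add (hB.mul hH),
      (contDiff_infty_iff_deriv.1 hA).2⟩

lemma AutonomousSolution.iteratedDeriv_comp (hf : AutonomousSolution Φ H S f)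
    (hΦ : ContDiff ℝ ∞ Φ) (hH : ContDiff ℝ ∞ H) (hu : ContDiff ℝ ∞ u) (k : ℕ) :
    ∀ τ ∈ S, iteratedDeriv k (fun t => u (f t)) τ
      = (derivCoeffs Φ H u k).1 (f τ) + (derivCoeffs Φ H u k).2 (f τ) * deriv f τ := by
  induction k with
  | zero => intro τ _; simp [derivCoeffs]
  | succ k ih =>
    intro τ hτ
    obtain ⟨hA, hB⟩ := contDiff_derivCoeffs hΦ hH hu k
    have hSτ := hf.isOpen.mem_nhds hτ
    have hf1 : HasDerivAt f (deriv f τ) τ := (hf.differentiableOn.differentiableAt hSτ).hasDerivAt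
    have hf2 : HasDerivAt (deriv f) (deriv (deriv f) τ) τ :=
      (hf.differentiableOn_deriv.differentiableAt hSτ).hasDerivAt
    have hd : HasDerivAt (fun t => (derivCoeffs Φ H u k).1 (f t)
        + (derivCoeffs Φ H u k).2 (f t) * deriv f t)
        (deriv (derivCoeffs Φ H u k).1 (f τ) * deriv f τ
          + (deriv (derivCoeffs Φ H u k).2 (f τ) * deriv f τ * deriv f τ
            + (derivCoeffs Φ H u k).2 (f τ) * deriv (deriv f) τ)) τ :=
      (((hA.differentiable (by simp)) (f τ)).hasDerivAt.comp τ hf1).add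
        ((((hB.differentiable (by simp)) (f τ)).hasDerivAt.comp τ hf1).mul hf2)
    rw [iteratedDeriv_succ, (eventuallyEq_of_mem hSτ ih).deriv_eq, hd.deriv,
      hf.deriv_deriv τ hτ]
    simp only [derivCoeffs]
    linear_combination deriv (derivCoeffs Φ H u k).2 (f τ) * hf.sq_deriv τ hτ

lemma expBoundedDerivs_derivCoeffs {s r X : ℝ} (hΦ : ExpBoundedDerivs (-(2 * s)) X Φ)
    (hH : ExpBoundedDerivs (-(2 * s)) X H) (hu : ExpBoundedDerivs r X u) :
    ∀ k : ℕ, ExpBoundedDerivs (r - k * s) X (derivCoeffs Φ H u k).1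
      ∧ ExpBoundedDerivs (r - k * s + s) X (derivCoeffs Φ H u k).2
  | 0 => ⟨hu.of_rate_eq (by simp), .zero⟩
  | k + 1 => by
    obtain ⟨hA, hB⟩ := expBoundedDerivs_derivCoeffs hΦ hH hu k
    exact ⟨((hB.deriv.mul hΦ).add (hB.mul hH)).of_rate_eq (by push_cast; ring),
      hA.deriv.of_rate_eq (by push_cast; ring)⟩

lemma AutonomousSolution.exists_abs_iteratedDeriv_comp_le (hf : AutonomousSolution Φ H S f)
    {s q X : ℝ} {w k N : ℕ} (hΦ : ExpBoundedDerivs (-(2 * s)) X Φ)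
    (hH : ExpBoundedDerivs (-(2 * s)) X H) (hu : ExpBoundedDerivs (-(w * s)) X u)
    (hN : w + k = N + 1) (hTS : T ⊆ S) (hfX : ∀ τ ∈ T, f τ ≤ X)
    (hfq : ∀ τ ∈ T, exp (-s * f τ) ≤ q * |deriv f τ|) :
    ∃ c, ∀ τ ∈ T, |iteratedDeriv k (fun t => u (f t)) τ| ≤ c * |deriv f τ| ^ (N + 1) := by
  obtain ⟨hA, hB⟩ := expBoundedDerivs_derivCoeffs hΦ hH hu k
  obtain ⟨CA, hCA0, hCA⟩ := hA.bound 0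
  obtain ⟨CB, hCB0, hCB⟩ := hB.bound 0
  have hNr : (w : ℝ) + k = N + 1 := by exact_mod_cast hN
  refine ⟨CA * q ^ (N + 1) + CB * q ^ N, fun τ hτ => ?_⟩
  have hAτ := hCA (f τ) (hfX τ hτ)
  have hBτ := hCB (f τ) (hfX τ hτ)
  rw [iteratedDeriv_zero] at hAτ hBτ
  rw [show (-(w * s) - k * s) * f τ = (N + 1 : ℕ) * (-s * f τ) by
    push_cast; linear_combination (-s * f τ) * hNr, exp_nat_mul] at hAτ
  rw [show (-(w * s) - k * s + s) * f τ = (N : ℕ) * (-s * f τ) by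
    linear_combination (-s * f τ) * hNr, exp_nat_mul] at hBτ
  have he := hfq τ hτ
  have he0 := (exp_pos (-s * f τ)).le
  rw [hf.iteratedDeriv_comp hΦ.contDiff hH.contDiff hu.contDiff k τ (hTS hτ)]
  calc _ ≤ |(derivCoeffs Φ H u k).1 (f τ)| + |(derivCoeffs Φ H u k).2 (f τ)| * |deriv f τ| := by
        rw [← abs_mul]; exact abs_add_le _ _
    _ ≤ CA * (q * |deriv f τ|) ^ (N + 1) + CB * (q * |deriv f τ|) ^ N * |deriv f τ| := by
        gcongr
        · exact hAτ.trans (by gcongr)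
        · exact hBτ.trans (by gcongr)
    _ = _ := by ring

end DerivCoeffs

lemma deriv_deriv_eq_of_sq_deriv_eq {Φ Φ' f : ℝ → ℝ} {S : Set ℝ} {τ : ℝ} (hS : S ∈ 𝓝 τ)
    (hΦ : HasDerivAt Φ (Φ' (f τ)) (f τ)) (hf : DifferentiableAt ℝ f τ)
    (hf' : DifferentiableAt ℝ (deriv f) τ) (hne : deriv f τ ≠ 0)
    (hfΦ : ∀ t ∈ S, deriv f t ^ 2 = Φ (f t)) :
    deriv (deriv f) τ = Φ' (f τ) / 2 := by
  have hsq : HasDerivAt (fun t => deriv f t ^ 2) (2 * deriv f τ * deriv (deriv f) τ) τ := by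
    simpa using hf'.hasDerivAt.fun_pow 2
  have hcomp := hsq.congr_of_eventuallyEq (eventuallyEq_of_mem hS hfΦ).symm
  have h := (hΦ.comp τ hf.hasDerivAt).unique hcomp
  field_simp
  exact mul_left_cancel₀ hne (by linear_combination -h)

lemma AutonomousSolution.of_sq_deriv_eq {Φ Φ' f : ℝ → ℝ} {S : Set ℝ} (hS : IsOpen S)
    (hΦ : ∀ x, HasDerivAt Φ (Φ' x) x) (hf : ContDiffOn ℝ ∞ f S) (hf' : ∀ τ ∈ S, deriv f τ ≠ 0)
    (hfΦ : ∀ τ ∈ S, deriv f τ ^ 2 = Φ (f τ)) :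
    AutonomousSolution Φ (fun x => Φ' x / 2) S f := by
  have hdf := hf.differentiableOn (by simp)
  have hddf := (hf.deriv_of_isOpen hS (m := ∞) le_rfl).differentiableOn (by simp)
  exact ⟨hS, hdf, hddf, hfΦ, fun τ hτ => deriv_deriv_eq_of_sq_deriv_eq (hS.mem_nhds hτ) (hΦ _)
    (hdf.differentiableAt (hS.mem_nhds hτ)) (hddf.differentiableAt (hS.mem_nhds hτ))
    (hf' τ hτ) hfΦ⟩

lemma le_inv_sqrt_mul_abs {c e d : ℝ} (hc : 0 < c) (he : 0 ≤ e) (h : c * e ^ 2 ≤ d ^ 2) :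
    e ≤ (√c)⁻¹ * |d| := by
  rw [inv_mul_eq_div, le_div_iff₀ (sqrt_pos.2 hc), ← sq_le_sq₀ (by positivity) (abs_nonneg d),
    mul_pow, sq_sqrt hc.le, sq_abs]
  linarith

lemma AutonomousSolution.exists_iteratedDeriv_bounds {Φ H f : ℝ → ℝ} {S T : Set ℝ}
    (hf : AutonomousSolution Φ H S f) {s q X : ℝ} (hΦ : ExpBoundedDerivs (-(2 * s)) X Φ)
    (hH : ExpBoundedDerivs (-(2 * s)) X H) (hG : ExpBoundedDerivs 0 X (fun x => H x + s * Φ x))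
    (hTS : T ⊆ S) (hfX : ∀ τ ∈ T, f τ ≤ X) (hfq : ∀ τ ∈ T, exp (-s * f τ) ≤ q * |deriv f τ|)
    (k : ℕ) (hk : 1 ≤ k) :
    ∃ c, ∀ τ ∈ T,
      |iteratedDeriv k (fun t => deriv (deriv f) t + s * deriv f t ^ 2) τ| ≤ c * |deriv f τ| ^ k
        ∧ |iteratedDeriv k f τ| ≤ c * |deriv f τ| ^ k := by
  obtain ⟨N, rfl⟩ : ∃ N, k = N + 1 := ⟨k - 1, by omega⟩
  have hS : ∀ τ ∈ T, S ∈ 𝓝 τ := fun τ hτ => hf.isOpen.mem_nhds (hTS hτ)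
  obtain ⟨c₁, hc₁⟩ := hf.exists_abs_iteratedDeriv_comp_le (w := 0) (k := N + 1) (N := N) hΦ hH
    (hG.of_rate_eq (by simp)) (by simp) hTS hfX hfq
  have hG' : ∀ τ ∈ T,
      |iteratedDeriv (N + 1) (fun t => deriv (deriv f) t + s * deriv f t ^ 2) τ|
        ≤ c₁ * |deriv f τ| ^ (N + 1) := fun τ hτ => by
    rw [EventuallyEq.iteratedDeriv_eq _ (eventuallyEq_of_mem (hS τ hτ)
      fun t ht => by rw [hf.deriv_deriv t ht, hf.sq_deriv t ht])]
    exact hc₁ τ hτ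
  obtain ⟨c₂, hc₂⟩ : ∃ c₂, ∀ τ ∈ T, |iteratedDeriv (N + 1) f τ| ≤ c₂ * |deriv f τ| ^ (N + 1) := by
    cases N with
    | zero => exact ⟨1, fun τ _ => by simp⟩
    | succ M =>
      obtain ⟨c₂, hc₂⟩ := hf.exists_abs_iteratedDeriv_comp_le (w := 2) (k := M) (N := M + 1) hΦ hH
        (hH.of_rate_eq (by simp)) (by omega) hTS hfX hfq
      refine ⟨c₂, fun τ hτ => ?_⟩
      rw [iteratedDeriv_succ', iteratedDeriv_succ', EventuallyEq.iteratedDeriv_eq _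
        (eventuallyEq_of_mem (hS τ hτ) hf.deriv_deriv)]
      exact hc₂ τ hτ
  refine ⟨max c₁ c₂, fun τ hτ => ⟨(hG' τ hτ).trans ?_, (hc₂ τ hτ).trans ?_⟩⟩ <;>
    gcongr
  exacts [le_max_left _ _, le_max_right _ _]

lemma eventually_exp_le_abs_deriv {ν X mt a : ℝ} {E f : ℝ → ℝ} (ha : 0 < a)
    (hEt : Tendsto E atBot (𝓝 mt)) (hmt : 0 < mt) (hfb : Tendsto f (𝓝[<] 0) atBot)
    (hfE : ∀ τ ∈ Ioo (-a) 0, deriv f τ ^ 2 = exp (-ν * f τ) * E (f τ)) :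
    ∀ᶠ τ in 𝓝[<] 0, τ ∈ Ioo (-a) 0 ∧ f τ ≤ X
      ∧ exp (-(ν / 2) * f τ) ≤ (√(mt / 2))⁻¹ * |deriv f τ| := by
  have hE : ∀ᶠ x in atBot, mt / 2 ≤ E x ∧ x ≤ X :=
    (hEt.eventually (eventually_ge_nhds (half_lt_self hmt))).and (eventually_le_atBot X)
  filter_upwards [Ioo_mem_nhdsLT (neg_lt_zero.2 ha), hfb.eventually hE] with τ hτ ⟨hEτ, hfX⟩
  refine ⟨hτ, hfX, le_inv_sqrt_mul_abs (half_pos hmt) (exp_pos _).le ?_⟩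
  rw [hfE τ hτ, ← exp_nat_mul, show ((2 : ℕ) : ℝ) * (-(ν / 2) * f τ) = -ν * f τ by
    push_cast; ring, mul_comm]
  exact mul_le_mul_of_nonneg_left hEτ (exp_pos _).le

theorem arwConds_of_sq_deriv_eq_exp_mul {ν X mt a : ℝ} {E E' f : ℝ → ℝ} (hν : 0 ≤ ν)
    (hX : X ≤ 0) (hE : ∀ x, HasDerivAt E (E' x) x) (hEb : ExpBoundedDerivs 0 X E)
    (hE'b : ExpBoundedDerivs ν X E') (hEt : Tendsto E atBot (𝓝 mt)) (hmt : 0 < mt)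
    (hE't : ∃ L, Tendsto (fun x => exp (-ν * x) * E' x) atBot (𝓝 L))
    (ha : 0 < a) (hf : ContDiffOn ℝ ∞ f (Ioo (-a) 0)) (hf' : ∀ τ ∈ Ioo (-a) 0, deriv f τ ≠ 0)
    (hfb : Tendsto f (𝓝[<] 0) atBot)
    (hfE : ∀ τ ∈ Ioo (-a) 0, deriv f τ ^ 2 = exp (-ν * f τ) * E (f τ)) :
    ARWConds (ν / 2) mt f := by
  set Φ : ℝ → ℝ := fun x => exp (-ν * x) * E x
  set Φ' : ℝ → ℝ := fun x => exp (-ν * x) * (E' x - ν * E x)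
  have hΦ : ∀ x, HasDerivAt Φ (Φ' x) x := fun x =>
    (((hasDerivAt_id' x).const_mul (-ν)).exp.fun_mul (hE x)).congr_deriv (by ring)
  have hsol : AutonomousSolution Φ (fun x => Φ' x / 2) (Ioo (-a) 0) f :=
    .of_sq_deriv_eq isOpen_Ioo hΦ hf hf' hfE
  have hG : ∀ x, Φ' x / 2 + ν / 2 * Φ x = exp (-ν * x) * E' x / 2 := fun x => by
    simp only [Φ, Φ']; ring
  have hSnhds : ∀ᶠ τ in 𝓝[<] (0 : ℝ), τ ∈ Ioo (-a) 0 := Ioo_mem_nhdsLT (by linarith)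
  refine ⟨?_, ?_, ?_⟩
  · refine (hEt.comp hfb).congr' (eventually_of_mem hSnhds fun τ hτ => ?_)
    show E (f τ) = deriv f τ ^ 2 * exp (2 * (ν / 2) * f τ)
    rw [hfE τ hτ, mul_right_comm, ← exp_add, show -ν * f τ + 2 * (ν / 2) * f τ = 0 by ring,
      exp_zero, one_mul]
  · obtain ⟨L, hL⟩ := hE't
    refine ⟨L / 2, ((hL.div_const 2).comp hfb).congr' (eventually_of_mem hSnhds
      fun τ hτ => ?_)⟩
    simp only [Function.comp, hsol.deriv_deriv τ hτ, hsol.sq_deriv τ hτ, ← hG]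
  · obtain ⟨l, hl, hlT⟩ := mem_nhdsLT_iff_exists_Ioo_subset.1
      (eventually_exp_le_abs_deriv (X := X) ha hEt hmt hfb hfE)
    have hexp : ExpBoundedDerivs (-ν) X (fun x => exp (-ν * x)) := .exp hX le_rfl
    have hΦb : ExpBoundedDerivs (-(2 * (ν / 2))) X Φ := (hexp.mul hEb).of_rate_eq (by ring)
    have hΦ'b : ExpBoundedDerivs (-(2 * (ν / 2))) X (fun x => Φ' x / 2) :=
      (((hexp.mul ((hE'b.mono hX hν).sub (hEb.const_mul ν))).const_mul (1 / 2)).of_rate_eq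
        (by ring)).congr fun x => by ring
    have hGb : ExpBoundedDerivs 0 X (fun x => Φ' x / 2 + ν / 2 * Φ x) :=
      (((hexp.mul hE'b).const_mul (1 / 2)).of_rate_eq (by ring)).congr fun x => by
        rw [hG]; ring
    refine ⟨-l, neg_pos.2 hl, fun k hk => ?_⟩
    rw [neg_neg]
    exact hsol.exists_iteratedDeriv_bounds hΦb hΦ'b hGb (fun τ hτ => (hlT hτ).1)
      (fun τ hτ => (hlT hτ).2.1) (fun τ hτ => (hlT hτ).2.2) k hk

lemma exists_tendsto_exp_mul_atBot {a : ℝ} (ha : 0 ≤ a) :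
    ∃ L, Tendsto (fun x => exp (a * x)) atBot (𝓝 L) :=
  ⟨_, tendsto_atBot_ciInf (fun _ _ h => exp_le_exp.2 (mul_le_mul_of_nonneg_left h ha))
    ⟨0, by rintro _ ⟨x, rfl⟩; positivity⟩⟩

lemma tendsto_exp_mul_atBot {a : ℝ} (ha : 0 < a) : Tendsto (fun x => exp (a * x)) atBot (𝓝 0) :=
  tendsto_exp_comp_nhds_zero.2 (tendsto_id.const_mul_atBot ha)

lemma tendsto_exp_neg_of_tendsto_zero {μ : ℝ → ℝ} (hμ0 : Tendsto μ atBot (𝓝 0)) :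
    Tendsto (fun x => exp (-μ x)) atBot (𝓝 1) := by
  simpa [Function.comp_def] using (continuous_exp.tendsto 0).comp (by simpa using hμ0.neg)

lemma expBoundedDerivs_exp_neg {μ lam : ℝ → ℝ} {X C : ℝ} (hμ : ∀ t, HasDerivAt μ (lam t) t)
    (hlam : ExpBoundedDerivs 0 X lam) (hμX : ∀ x ≤ X, -C ≤ μ x) :
    ExpBoundedDerivs 0 X (fun x => exp (-μ x)) := by
  have hμs : ContDiff ℝ ∞ μ := contDiff_infty_iff_deriv.2
    ⟨fun x => (hμ x).differentiableAt, by rw [funext fun x => (hμ x).deriv]; exact hlam.contDiff⟩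
  refine .of_deriv_eq_mul (v := fun x => -1 * lam x) hμs.neg.exp
    ⟨exp C, (exp_pos C).le, fun x hx => ?_⟩ (hlam.const_mul (-1))
    (funext fun x => (hμ x).neg.exp.deriv.trans (by simp only [Pi.neg_apply]; ring))
  rw [iteratedDeriv_zero, abs_exp, zero_mul, exp_zero, mul_one]
  exact exp_le_exp.2 (by linarith [hμX x hx])

section Brane

variable (n m b k c σ ρ : ℝ) (μ lam : ℝ → ℝ)

noncomputable def braneP (x : ℝ) : ℝ :=
  σ * exp ((n + 1) / 2 * x) + ρ * exp (-μ x)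

noncomputable def braneP' (x : ℝ) : ℝ :=
  σ * ((n + 1) / 2 * exp ((n + 1) / 2 * x)) - ρ * (lam x * exp (-μ x))

/-- `e^{(n-1)x}` times the right-hand side of the modified Friedmann equation at `f = x` when
`ω₀ = -(n-1)/2`, with `b = 2Λ/(n(n+1))`, `k = κ̃` and `c = κ²/n²`. -/
noncomputable def braneE (x : ℝ) : ℝ :=
  m + b * exp ((n + 1) * x) - k * exp ((n - 1) * x) + c * braneP n σ ρ μ x ^ 2

noncomputable def braneE' (x : ℝ) : ℝ :=
  b * ((n + 1) * exp ((n + 1) * x)) - k * ((n - 1) * exp ((n - 1) * x))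
    + c * (2 * braneP n σ ρ μ x * braneP' n σ ρ μ lam x)

variable {n m b k c σ ρ μ lam}

lemma friedmann_rhs_eq {ω₀ : ℝ} (hω₀ : ω₀ = -(n - 1) / 2) (x : ℝ) :
    m * exp (-(n - 1) * x) + b * exp (2 * x) - k
      + c * (σ + ρ * exp (-(n + ω₀) * x - μ x)) ^ 2 * exp (2 * x)
      = exp (-(n - 1) * x) * braneE n m b k c σ ρ μ x := by
  subst hω₀
  have hB : exp (-μ x) = exp ((n + 1) / 2 * x) * exp (-(n + -(n - 1) / 2) * x - μ x) := by
    rw [← exp_add]; ring_nf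
  have h1 : exp ((n + 1) * x) = exp ((n + 1) / 2 * x) ^ 2 := by rw [← exp_nat_mul]; ring_nf
  have h2 : exp (2 * x) = exp (-(n - 1) * x) * exp ((n + 1) / 2 * x) ^ 2 := by
    rw [← exp_nat_mul, ← exp_add]; ring_nf
  have h3 : exp (-(n - 1) * x) * exp ((n - 1) * x) = 1 := by rw [← exp_add]; ring_nf; simp
  simp only [braneE, braneP]
  rw [hB, h1, h2]
  linear_combination k * h3

lemma hasDerivAt_braneP (hμ : ∀ t, HasDerivAt μ (lam t) t) (x : ℝ) :
    HasDerivAt (braneP n σ ρ μ) (braneP' n σ ρ μ lam x) x := by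
  have h1 := (((hasDerivAt_id' x).const_mul ((n + 1) / 2)).exp.const_mul σ)
  have h2 := ((hμ x).neg.exp.const_mul ρ)
  exact (h1.add h2).congr_deriv (by simp only [braneP', Pi.neg_apply]; ring)

lemma hasDerivAt_braneE (hμ : ∀ t, HasDerivAt μ (lam t) t) (x : ℝ) :
    HasDerivAt (braneE n m b k c σ ρ μ) (braneE' n b k c σ ρ μ lam x) x := by
  have hexp (a : ℝ) := ((hasDerivAt_id' x).const_mul a).exp
  have h := (((hasDerivAt_const x m).add ((hexp (n + 1)).const_mul b)).sub
    ((hexp (n - 1)).const_mul k)).add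
    (((hasDerivAt_braneP (n := n) (σ := σ) (ρ := ρ) hμ x).fun_pow 2).const_mul c)
  exact h.congr_deriv (by simp only [braneE']; ring)

variable {X : ℝ}

lemma expBoundedDerivs_braneP (hX : X ≤ 0) (hn : -1 ≤ n)
    (hB : ExpBoundedDerivs 0 X (fun x => exp (-μ x))) :
    ExpBoundedDerivs 0 X (braneP n σ ρ μ) :=
  ((ExpBoundedDerivs.exp hX (by linarith)).const_mul σ).add (hB.const_mul ρ)

lemma expBoundedDerivs_braneP' (hX : X ≤ 0) (hσ : σ = 0 ∨ n ≤ 3)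
    (hB : ExpBoundedDerivs 0 X (fun x => exp (-μ x))) (hlam : ExpBoundedDerivs (n - 1) X lam) :
    ExpBoundedDerivs (n - 1) X (braneP' n σ ρ μ lam) := by
  refine .sub ?_ (((hlam.mul hB).of_rate_eq (add_zero _)).const_mul ρ)
  rcases hσ with rfl | hn
  · simpa only [zero_mul] using ExpBoundedDerivs.zero
  · exact ((ExpBoundedDerivs.exp hX (by linarith)).const_mul _).const_mul σ

lemma expBoundedDerivs_braneE (hX : X ≤ 0) (hn : 1 ≤ n)
    (hB : ExpBoundedDerivs 0 X (fun x => exp (-μ x))) :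
    ExpBoundedDerivs 0 X (braneE n m b k c σ ρ μ) := by
  have hP := expBoundedDerivs_braneP (σ := σ) (ρ := ρ) hX (by linarith) hB
  have h1 : ExpBoundedDerivs 0 X (fun x => exp ((n + 1) * x)) := .exp hX (by linarith)
  have h2 : ExpBoundedDerivs 0 X (fun x => exp ((n - 1) * x)) := .exp hX (by linarith)
  refine ((((ExpBoundedDerivs.const m).add (h1.const_mul b)).sub (h2.const_mul k)).add
    (((hP.mul hP).of_rate_eq (add_zero 0)).const_mul c)).congr fun x => ?_
  simp only [braneE]; ring

lemma expBoundedDerivs_braneE' (hX : X ≤ 0) (hn : 1 ≤ n) (hσ : σ = 0 ∨ n ≤ 3)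
    (hB : ExpBoundedDerivs 0 X (fun x => exp (-μ x))) (hlam : ExpBoundedDerivs (n - 1) X lam) :
    ExpBoundedDerivs (n - 1) X (braneE' n b k c σ ρ μ lam) := by
  have hP := expBoundedDerivs_braneP (σ := σ) (ρ := ρ) hX (by linarith) hB
  have hP' := expBoundedDerivs_braneP' (ρ := ρ) hX hσ hB hlam
  have h1 : ExpBoundedDerivs (n - 1) X (fun x => exp ((n + 1) * x)) := .exp hX (by linarith)
  have h2 : ExpBoundedDerivs (n - 1) X (fun x => exp ((n - 1) * x)) := .exp hX le_rfl
  refine ((((h1.const_mul (n + 1)).const_mul b).sub ((h2.const_mul (n - 1)).const_mul k)).add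
    ((((hP.mul hP').of_rate_eq (zero_add _)).const_mul 2).const_mul c)).congr fun x => ?_
  simp only [braneE']; ring

lemma tendsto_braneP (hn : -1 < n) (hμ0 : Tendsto μ atBot (𝓝 0)) :
    Tendsto (braneP n σ ρ μ) atBot (𝓝 ρ) := by
  have h := ((tendsto_exp_mul_atBot (a := (n + 1) / 2) (by linarith)).const_mul σ).add
    ((tendsto_exp_neg_of_tendsto_zero hμ0).const_mul ρ)
  simp only [mul_zero, zero_add, mul_one] at h
  exact h

lemma tendsto_braneE (hn : 1 < n) (hμ0 : Tendsto μ atBot (𝓝 0)) :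
    Tendsto (braneE n m b k c σ ρ μ) atBot (𝓝 (m + c * ρ ^ 2)) := by
  have h := (((tendsto_const_nhds (x := m)).add
    ((tendsto_exp_mul_atBot (a := n + 1) (by linarith)).const_mul b)).sub
    ((tendsto_exp_mul_atBot (a := n - 1) (by linarith)).const_mul k)).add
    (((tendsto_braneP (σ := σ) (ρ := ρ) (by linarith) hμ0).pow 2).const_mul c)
  simp only [mul_zero, add_zero, sub_zero] at h
  exact h

lemma exists_tendsto_exp_mul_braneE' (hn : 1 < n) (hσ : σ = 0 ∨ n ≤ 3)
    (hμ0 : Tendsto μ atBot (𝓝 0)) {L : ℝ}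
    (hlam : Tendsto (fun t => lam t * exp (-(n - 1) * t)) atBot (𝓝 L)) :
    ∃ L', Tendsto (fun x => exp (-(n - 1) * x) * braneE' n b k c σ ρ μ lam x) atBot (𝓝 L') := by
  obtain ⟨Lσ, hLσ⟩ : ∃ Lσ, Tendsto (fun x => σ * exp ((3 - n) / 2 * x)) atBot (𝓝 Lσ) := by
    rcases hσ with rfl | hn3
    · exact ⟨0, by simp⟩
    · obtain ⟨L₀, h⟩ := exists_tendsto_exp_mul_atBot (a := (3 - n) / 2) (by linarith)
      exact ⟨_, h.const_mul σ⟩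
  have h := (((tendsto_exp_mul_atBot (a := 2) two_pos).const_mul (b * (n + 1))).sub
    (tendsto_const_nhds (x := k * (n - 1)))).add
    ((((tendsto_braneP (σ := σ) (ρ := ρ) (by linarith) hμ0).const_mul 2).mul
    ((hLσ.const_mul ((n + 1) / 2)).sub
      ((hlam.mul (tendsto_exp_neg_of_tendsto_zero hμ0)).const_mul ρ))).const_mul c)
  refine ⟨_, h.congr fun x => ?_⟩
  have h1 : exp (-(n - 1) * x) * exp ((n + 1) * x) = exp (2 * x) := by rw [← exp_add]; ring_nf
  have h2 : exp (-(n - 1) * x) * exp ((n - 1) * x) = 1 := by rw [← exp_add]; ring_nf; simp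
  have h3 : exp (-(n - 1) * x) * exp ((n + 1) / 2 * x) = exp ((3 - n) / 2 * x) := by
    rw [← exp_add]; ring_nf
  simp only [braneE', braneP']
  linear_combination (-(b * (n + 1))) * h1 + k * (n - 1) * h2
    - c * 2 * braneP n σ ρ μ x * σ * ((n + 1) / 2) * h3

end Brane

theorem arw_sufficient_critical_omega_general
    (n : ℕ) (hn : 3 ≤ n)
    (m Λ κt κ σ ω₀ ρ₀ : ℝ)
    (hm : 0 < m)
    (hκ : κ ≠ 0) (hρ₀ : 0 < ρ₀)
    (lam μt : ℝ → ℝ)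
    (hlam : ContDiff ℝ (⊤ : ℕ∞) lam)
    (hμt : ∀ t : ℝ, HasDerivAt μt (lam t) t)
    (hμt0 : Filter.Tendsto μt Filter.atBot (nhds 0))
    (a : ℝ) (ha : 0 < a) (f : ℝ → ℝ)
    (hf : ContDiffOn ℝ (⊤ : ℕ∞) f (Set.Ioo (-a) 0))
    (hf' : ∀ τ ∈ Set.Ioo (-a) (0:ℝ), deriv f τ < 0)
    (hfb : Filter.Tendsto f (nhdsWithin 0 (Set.Iio 0)) Filter.atBot)
    (hFried : ∀ τ ∈ Set.Ioo (-a) (0:ℝ),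
      (deriv f τ) ^ 2
        = m * Real.exp (-((n : ℝ) - 1) * f τ)
          + (2 * Λ / ((n : ℝ) * ((n : ℝ) + 1))) * Real.exp (2 * f τ) - κt
          + (κ ^ 2 / (n : ℝ) ^ 2)
            * (σ + ρ₀ * Real.exp (-((n : ℝ) + ω₀) * f τ - μt (f τ))) ^ 2
            * Real.exp (2 * f τ))
    (hω₀ : ω₀ = -((n : ℝ) - 1) / 2)
    (hσ : 3 < n → σ = 0)
    (hlamB : ∀ k : ℕ, ∃ c : ℝ, ∀ t : ℝ,
      |iteratedDeriv k lam t| ≤ c * Real.exp (((n : ℝ) - 1) * t))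
    (hlamlim : ∃ L : ℝ, Filter.Tendsto (fun t => lam t * Real.exp (-((n : ℝ) - 1) * t))
      Filter.atBot (nhds L)) :
    ARWConds (((n : ℝ) - 1) / 2) (m + κ ^ 2 / (n : ℝ) ^ 2 * ρ₀ ^ 2) f
      ∧ m < m + κ ^ 2 / (n : ℝ) ^ 2 * ρ₀ ^ 2
      ∧ Filter.Tendsto (fun τ => (deriv f τ) ^ 2 * Real.exp (((n : ℝ) - 1) * f τ))
          (nhdsWithin 0 (Set.Iio 0)) (nhds (m + κ ^ 2 / (n : ℝ) ^ 2 * ρ₀ ^ 2)) := by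
  have hn3 : (3 : ℝ) ≤ n := by exact_mod_cast hn
  have hσn : σ = 0 ∨ (n : ℝ) ≤ 3 :=
    hn.lt_or_eq.imp hσ fun h => by rw [← h]; norm_num
  obtain ⟨X, hX⟩ := eventually_atBot.1
    ((hμt0.eventually (Icc_mem_nhds neg_one_lt_zero one_pos)).and (eventually_le_atBot 0))
  have hlamE : ExpBoundedDerivs ((n : ℝ) - 1) X lam := ⟨hlam, fun j => by
    obtain ⟨c, hc⟩ := hlamB j
    exact ⟨|c|, abs_nonneg c, fun x _ => (hc x).trans
      (mul_le_mul_of_nonneg_right (le_abs_self c) (exp_pos _).le)⟩⟩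
  have hX0 : X ≤ 0 := (hX X le_rfl).2
  have hB := expBoundedDerivs_exp_neg hμt (hlamE.mono hX0 (by linarith))
    (fun x hx => (hX x hx).1.1)
  obtain ⟨L, hL⟩ := hlamlim
  have hARW := arwConds_of_sq_deriv_eq_exp_mul (by linarith) hX0 (hasDerivAt_braneE hμt)
    (expBoundedDerivs_braneE hX0 (by linarith) hB)
    (expBoundedDerivs_braneE' hX0 (by linarith) hσn hB hlamE) (tendsto_braneE (by linarith) hμt0)
    (by positivity) (exists_tendsto_exp_mul_braneE' (by linarith) hσn hμt0 hL) ha hf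
    (fun τ hτ => (hf' τ hτ).ne) hfb fun τ hτ => (hFried τ hτ).trans (friedmann_rhs_eq hω₀ _)
  refine ⟨hARW, lt_add_of_pos_right m (by positivity), hARW.1.congr fun τ => ?_⟩
  ring_nf

/-- If `ω₀ = -(n-1)/2` (with `σ = 0` if `n > 3`), `|lam⁽ᵏ⁾(t)| ≤ c_k e^{(n-1)t}` for all
`k`, and `lam(t) e^{-(n-1)t}` has a limit as `t → -∞`, then every brane scale function
satisfies the ARW conditions with constant `γ = (n-1)/2` and mass
`m + (κ²/n²) ρ₀² > m`. -/
theorem arw_sufficient_critical_omega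
    (n : ℕ) (hn : 3 ≤ n)
    (m Λ κt κ σ ω₀ ρ₀ : ℝ)
    (hm : 0 < m) (hΛ : Λ ≤ 0)
    (hκt : κt = -1 ∨ κt = 0 ∨ κt = 1) (hΛκt : Λ = 0 → κt = 1)
    (hκ : κ ≠ 0) (hρ₀ : 0 < ρ₀)
    (lam μt : ℝ → ℝ)
    (hlam : ContDiff ℝ (⊤ : ℕ∞) lam)
    (hlam0 : Filter.Tendsto lam Filter.atBot (nhds 0))
    (hμt : ∀ t : ℝ, HasDerivAt μt (lam t) t)
    (hμt0 : Filter.Tendsto μt Filter.atBot (nhds 0))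
    (a : ℝ) (ha : 0 < a) (f : ℝ → ℝ)
    (hf : ContDiffOn ℝ (⊤ : ℕ∞) f (Set.Ioo (-a) 0))
    (hf' : ∀ τ ∈ Set.Ioo (-a) (0:ℝ), deriv f τ < 0)
    (hfb : Filter.Tendsto f (nhdsWithin 0 (Set.Iio 0)) Filter.atBot)
    (hFried : ∀ τ ∈ Set.Ioo (-a) (0:ℝ),
      (deriv f τ) ^ 2
        = m * Real.exp (-((n : ℝ) - 1) * f τ)
          + (2 * Λ / ((n : ℝ) * ((n : ℝ) + 1))) * Real.exp (2 * f τ) - κt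
          + (κ ^ 2 / (n : ℝ) ^ 2)
            * (σ + ρ₀ * Real.exp (-((n : ℝ) + ω₀) * f τ - μt (f τ))) ^ 2
            * Real.exp (2 * f τ))
    (hω₀ : ω₀ = -((n : ℝ) - 1) / 2)
    (hσ : 3 < n → σ = 0)
    (hlamB : ∀ k : ℕ, ∃ c : ℝ, ∀ t : ℝ,
      |iteratedDeriv k lam t| ≤ c * Real.exp (((n : ℝ) - 1) * t))
    (hlamlim : ∃ L : ℝ, Filter.Tendsto (fun t => lam t * Real.exp (-((n : ℝ) - 1) * t))
      Filter.atBot (nhds L)) :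
    ARWConds (((n : ℝ) - 1) / 2) (m + κ ^ 2 / (n : ℝ) ^ 2 * ρ₀ ^ 2) f
      ∧ m < m + κ ^ 2 / (n : ℝ) ^ 2 * ρ₀ ^ 2
      ∧ Filter.Tendsto (fun τ => (deriv f τ) ^ 2 * Real.exp (((n : ℝ) - 1) * f τ))
          (nhdsWithin 0 (Set.Iio 0)) (nhds (m + κ ^ 2 / (n : ℝ) ^ 2 * ρ₀ ^ 2)) :=
  arw_sufficient_critical_omega_general n hn m Λ κt κ σ ω₀ ρ₀ hm hκ hρ₀ lam μt hlam hμt hμt0 a ha f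
    hf hf' hfb hFried hω₀ hσ hlamB hlamlim
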